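/- arXiv:0812.2423 — 3 statements merged into one kernel-verified Lean document; each statement's English description precedes it below -/
import Mathlib

section
/- Let W be a (possibly infinite) nested word and r ∈ ℕ. Define two positions i, i' to have an r-overlap if the r-spheres of W around i and i' are isomorphic and the Gaifman distance between i and i' is at most 2r+1. Then the overlap graph (vertices: positions; edges: r-overlapping distinct pairs) has degree at most 4·M², where M is the maximal number of positions within Gaifman distance r of a fixed position. Consequently, there is a proper coloring χ of the positions with 4·M²+1 colors such that distinct r-overlapping positions receive distinct colors. -/
/-- The *kind* of a letter in a `K`-stack call-return alphabet: a call of some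
stack `s`, a return of some stack `s`, or an internal action. -/
inductive CRKind (K : ℕ) where
  | call (s : Fin K)
  | ret (s : Fin K)
  | int

/-- A `K`-stack call-return alphabet over the letters `A`: every letter is
(exclusively) a call of one stack, a return of one stack, or internal.  This
encodes the pairwise disjointness of the collection
`⟨{(Σ_c^s, Σ_r^s)}_{s∈[K]}, Σ_int⟩` together with `Σ` being their union. -/
structure CRAlphabet (K : ℕ) (A : Type) where
  kind : A → CRKind K

namespace CRAlphabet

variable {K : ℕ} {A : Type}

def callSet (h : CRAlphabet K A) (s : Fin K) : Set A := {a | h.kind a = .call s}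
def retSet (h : CRAlphabet K A) (s : Fin K) : Set A := {a | h.kind a = .ret s}
def intSet (h : CRAlphabet K A) : Set A := {a | h.kind a = .int}

end CRAlphabet

/-- `s`-well-formed strings: generated by the grammar
`A ::= aAb | AA | ε | c` with `a ∈ c`, `b ∈ r`, `c ∉ c ∪ r`. -/
inductive SWellFormed {A : Type} (c r : Set A) : List A → Prop where
  | nil : SWellFormed c r []
  | single {x : A} : x ∉ c → x ∉ r → SWellFormed c r [x]
  | wrap {a b : A} {u : List A} : a ∈ c → b ∈ r → SWellFormed c r u →
      SWellFormed c r (a :: u ++ [b])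
  | concat {u v : List A} : SWellFormed c r u → SWellFormed c r v →
      SWellFormed c r (u ++ v)

/-- The matching relation `μ^s` of the nested word determined by the string
`w` (positions `0`-based): `(i,j) ∈ μ^s` iff `i < j`, `λ(i) ∈ Σ_c^s`,
`λ(j) ∈ Σ_r^s` and `λ(i+1) … λ(j-1)` is `s`-well formed. -/
def Matched {K : ℕ} {A : Type} (h : CRAlphabet K A) (w : List A) (s : Fin K)
    (i j : ℕ) : Prop :=
  i < j ∧ j < w.length ∧
  (∃ a, w[i]? = some a ∧ a ∈ h.callSet s) ∧
  (∃ b, w[j]? = some b ∧ b ∈ h.retSet s) ∧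
  SWellFormed (h.callSet s) (h.retSet s) ((w.take j).drop (i + 1))

/-- The full matching relation `μ = ⋃_s μ^s`. -/
def MuAny {K : ℕ} {A : Type} (h : CRAlphabet K A) (w : List A) (i j : ℕ) : Prop :=
  ∃ s, Matched h w s i j

/-- Lift a set of letters to a set of optional letters. -/
def somes {A : Type} (S : Set A) : Set (Option A) := {o | ∃ a ∈ S, o = some a}

/-- A (possibly infinite) nested word is given by a labeling
`lab : ℕ → Option A` whose domain (the positions, where `lab i ≠ none`) is
downward closed; this covers both the finite domains `[n]` and the infinite
domain `ℕ`.  `OMatched` is its matching relation `μ^s`. -/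
def OMatched {K : ℕ} {A : Type} (h : CRAlphabet K A) (lab : ℕ → Option A)
    (s : Fin K) (i j : ℕ) : Prop :=
  i < j ∧ lab i ∈ somes (h.callSet s) ∧ lab j ∈ somes (h.retSet s) ∧
  SWellFormed (somes (h.callSet s)) (somes (h.retSet s))
    ((List.range (j - (i + 1))).map fun k => lab (i + 1 + k))

/-- Gaifman adjacency for possibly infinite nested words. -/
def OAdj {K : ℕ} {A : Type} (h : CRAlphabet K A) (lab : ℕ → Option A)
    (i j : ℕ) : Prop :=
  (j = i + 1 ∧ lab j ≠ none) ∨ (i = j + 1 ∧ lab i ≠ none) ∨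
    (∃ s, OMatched h lab s i j ∨ OMatched h lab s j i)

/-- Gaifman distance at most `d`. -/
def ODistLE {K : ℕ} {A : Type} (h : CRAlphabet K A) (lab : ℕ → Option A) :
    ℕ → ℕ → ℕ → Prop
  | 0, i, j => i = j
  | d + 1, i, j => i = j ∨ ∃ k, OAdj h lab i k ∧ ODistLE h lab d k j

/-- The ball of radius `r` around `i`. -/
def oball {K : ℕ} {A : Type} (h : CRAlphabet K A) (lab : ℕ → Option A)
    (r i : ℕ) : Set ℕ :=
  {j | ODistLE h lab r i j}

/-- The `r`-spheres around `i` and `i'` (in the same word) are isomorphic: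
some bijection of the balls maps center to center and preserves labels,
successor edges and matching edges. -/
def OSphIso {K : ℕ} {A : Type} (h : CRAlphabet K A) (lab : ℕ → Option A)
    (r i i' : ℕ) : Prop :=
  ∃ f : ℕ → ℕ, f i = i' ∧ Set.BijOn f (oball h lab r i) (oball h lab r i') ∧
    (∀ j ∈ oball h lab r i, lab j = lab (f j)) ∧
    (∀ j ∈ oball h lab r i, ∀ k ∈ oball h lab r i,
      ((k = j + 1 ∧ lab k ≠ none) ↔ (f k = f j + 1 ∧ lab (f k) ≠ none)) ∧
      (∀ s, OMatched h lab s j k ↔ OMatched h lab s (f j) (f k)))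

/-- `i` and `i'` have an `r`-overlap: isomorphic `r`-spheres and Gaifman
distance at most `2r+1`. -/
def Overlap {K : ℕ} {A : Type} (h : CRAlphabet K A) (lab : ℕ → Option A)
    (r i i' : ℕ) : Prop :=
  OSphIso h lab r i i' ∧ ODistLE h lab (2 * r + 1) i i'

/-!
Overlapping positions are at Gaifman distance at most `2r+1`, so it suffices to bound the
`(2r+1)`-balls. A position has at most three Gaifman neighbours: its successor, its predecessor
and at most one matching partner. Indeed its letter is a call or a return of a single stack, and
comparing the numbers of calls and returns in prefixes and suffixes of well-formed strings shows
that a call has at most one matching return and a return at most one matching call. So `1`-balls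
have at most `4` elements, and `B_{2r+1}(i) = ⋃_{k ∈ B_1(i)} ⋃_{m ∈ B_r(k)} B_r(m)` has at most
`4M²`. Colouring the positions greedily in increasing order then needs at most `4M² + 1` colours.
-/

theorem Set.ncard_biUnion_le_mul {ι α : Type*} {t : Set ι} (ht : t.Finite) {s : ι → Set α}
    {b : ℕ} (hb : ∀ i ∈ t, (s i).ncard ≤ b) : (⋃ i ∈ t, s i).ncard ≤ t.ncard * b := by
  have hle := ht.toFinset.set_ncard_biUnion_le s
  simp only [Set.Finite.mem_toFinset] at hle
  rw [Set.ncard_eq_toFinset_card t ht]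
  exact hle.trans (Finset.sum_le_card_nsmul _ _ _ (by simpa using hb))

namespace SimpleGraph

variable {G : SimpleGraph ℕ} {N : ℕ}

/-- When all colours are taken, `Classical.epsilon` returns an arbitrary one; `greedyColor_ne`
excludes this under a bound on the number of smaller neighbours. -/
noncomputable def greedyColor (G : SimpleGraph ℕ) (N : ℕ) (v : ℕ) : Fin (N + 1) :=
  Classical.epsilon fun c => ∀ w : Fin v, G.Adj v w → greedyColor G N w ≠ c
termination_by v
decreasing_by exact w.isLt

theorem greedyColor_ne (hN : ∀ v, (G.neighborSet v ∩ Set.Iio v).ncard ≤ N) {v w : ℕ}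
    (hvw : G.Adj v w) (hwv : w < v) : greedyColor G N w ≠ greedyColor G N v := by
  have hfree : ∃ c, c ∉ greedyColor G N '' (G.neighborSet v ∩ Set.Iio v) := by
    rw [← Set.ne_univ_iff_exists_notMem]
    intro huniv
    have hcard := (Set.ncard_image_le (f := greedyColor G N)
      ((Set.finite_Iio v).inter_of_right _)).trans (hN v)
    rw [huniv, Set.ncard_univ, Nat.card_eq_fintype_card, Fintype.card_fin] at hcard
    omega
  obtain ⟨c, hc⟩ := hfree
  have hspec : ∀ u : Fin v, G.Adj v u → greedyColor G N u ≠ greedyColor G N v := by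
    rw [greedyColor.eq_1 G N v]
    exact Classical.epsilon_spec (p := fun c => ∀ u : Fin v, G.Adj v u → greedyColor G N u ≠ c)
      ⟨c, fun u hu hcu => hc ⟨u, ⟨hu, u.isLt⟩, hcu⟩⟩
  exact hspec ⟨w, hwv⟩ hvw

theorem colorable_of_ncard_neighborSet_inter_Iio_le
    (hN : ∀ v, (G.neighborSet v ∩ Set.Iio v).ncard ≤ N) : G.Colorable (N + 1) :=
  ⟨Coloring.mk (greedyColor G N) fun {v w} hvw => by
    rcases lt_or_gt_of_ne hvw.ne with hlt | hlt
    · exact greedyColor_ne hN hvw.symm hlt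
    · exact (greedyColor_ne hN hvw hlt).symm⟩

end SimpleGraph

namespace SWellFormed

variable {α : Type} {c r : Set α}

section Counting

variable [DecidablePred (· ∈ c)] [DecidablePred (· ∈ r)]

theorem countP_ret_eq_countP_call (hd : Disjoint c r) {u : List α} (hu : SWellFormed c r u) :
    u.countP (· ∈ r) = u.countP (· ∈ c) := by
  induction hu with
  | nil => rfl
  | single hc hr => simp [hc, hr]
  | wrap ha hb _ ih =>
    simp [List.countP_append, ha, hb, hd.notMem_of_mem_left ha, hd.notMem_of_mem_right hb, ih]
  | concat _ _ ihu ihv => simp [List.countP_append, ihu, ihv]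

theorem countP_ret_take_le (hd : Disjoint c r) {u : List α} (hu : SWellFormed c r u) (n : ℕ) :
    (u.take n).countP (· ∈ r) ≤ (u.take n).countP (· ∈ c) := by
  induction hu generalizing n with
  | nil => simp
  | single _ hr => cases n <;> simp [hr]
  | @wrap a b u ha _ _ ih =>
    cases n with
    | zero => simp
    | succ n =>
      have hb : ([b].take (n - u.length)).countP (· ∈ r) ≤ 1 :=
        List.countP_le_length.trans (List.length_take_le' _ _)
      have hih := ih n
      simp only [List.cons_append, List.take_succ_cons, List.take_append, List.countP_cons,
        List.countP_append, ha, hd.notMem_of_mem_left ha, decide_true, decide_false, if_true,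
        Bool.false_eq_true, if_false] at hb ⊢
      omega
  | concat _ _ ihu ihv =>
    simp only [List.take_append, List.countP_append]
    exact Nat.add_le_add (ihu n) (ihv _)

theorem countP_ret_le_of_append (hd : Disjoint c r) {p q : List α}
    (hu : SWellFormed c r (p ++ q)) : p.countP (· ∈ r) ≤ p.countP (· ∈ c) := by
  simpa using hu.countP_ret_take_le hd p.length

theorem countP_call_le_of_append (hd : Disjoint c r) {p q : List α}
    (hu : SWellFormed c r (p ++ q)) : q.countP (· ∈ c) ≤ q.countP (· ∈ r) := by
  have hbal := hu.countP_ret_eq_countP_call hd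
  have hp := hu.countP_ret_le_of_append hd
  rw [List.countP_append, List.countP_append] at hbal
  omega

end Counting

theorem false_of_append_ret (hd : Disjoint c r) {u w : List α} {b : α} (hb : b ∈ r)
    (hu : SWellFormed c r u) (huw : SWellFormed c r (u ++ [b] ++ w)) : False := by
  classical
  have hbal := hu.countP_ret_eq_countP_call hd
  have hpre := huw.countP_ret_le_of_append hd
  simp [List.countP_append, hb, hd.notMem_of_mem_right hb] at hpre
  omega

theorem false_of_call_append (hd : Disjoint c r) {u w : List α} {a : α} (ha : a ∈ c)
    (hu : SWellFormed c r u) (hwu : SWellFormed c r (w ++ ([a] ++ u))) : False := by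
  classical
  have hbal := hu.countP_ret_eq_countP_call hd
  have hsuf := hwu.countP_call_le_of_append hd
  simp [ha, hd.notMem_of_mem_left ha] at hsuf
  omega

end SWellFormed

section NestedWord

variable {K : ℕ} {A : Type} {h : CRAlphabet K A} {lab : ℕ → Option A}

def labelsIco (lab : ℕ → Option A) (a b : ℕ) : List (Option A) :=
  (List.range (b - a)).map fun k => lab (a + k)

theorem labelsIco_append {a b c : ℕ} (hab : a ≤ b) (hbc : b ≤ c) :
    labelsIco lab a b ++ labelsIco lab b c = labelsIco lab a c := by
  obtain ⟨m, rfl⟩ := Nat.exists_eq_add_of_le hab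
  obtain ⟨n, rfl⟩ := Nat.exists_eq_add_of_le hbc
  simp [labelsIco, Nat.add_assoc, List.range_add, Function.comp_def, Nat.add_sub_add_left]

theorem labelsIco_succ (a : ℕ) : labelsIco lab a (a + 1) = [lab a] := by
  simp [labelsIco]

theorem OMatched.wellFormed {s : Fin K} {i j : ℕ} (hm : OMatched h lab s i j) :
    SWellFormed (somes (h.callSet s)) (somes (h.retSet s)) (labelsIco lab (i + 1) j) :=
  hm.2.2.2

theorem mem_somes_callSet {o : Option A} {s : Fin K} :
    o ∈ somes (h.callSet s) ↔ o.map h.kind = some (.call s) := by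
  simp [somes, CRAlphabet.callSet, Option.map_eq_some_iff, eq_comm, and_comm]

theorem mem_somes_retSet {o : Option A} {s : Fin K} :
    o ∈ somes (h.retSet s) ↔ o.map h.kind = some (.ret s) := by
  simp [somes, CRAlphabet.retSet, Option.map_eq_some_iff, eq_comm, and_comm]

theorem disjoint_somes_callSet_retSet (s : Fin K) :
    Disjoint (somes (h.callSet s)) (somes (h.retSet s)) := by
  rw [Set.disjoint_left]
  intro o hc hr
  rw [mem_somes_callSet] at hc
  rw [mem_somes_retSet, hc] at hr
  cases hr

theorem OMatched.not_lt_right {s : Fin K} {i j j' : ℕ} (h1 : OMatched h lab s i j)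
    (h2 : OMatched h lab s i j') : ¬j < j' := by
  intro hlt
  have hsplit : labelsIco lab (i + 1) j ++ [lab j] ++ labelsIco lab (j + 1) j' =
      labelsIco lab (i + 1) j' := by
    rw [← labelsIco_succ, labelsIco_append h1.1 j.le_succ,
      labelsIco_append (Nat.le_succ_of_le h1.1) hlt]
  exact h1.wellFormed.false_of_append_ret (disjoint_somes_callSet_retSet s) h1.2.2.1
    (hsplit ▸ h2.wellFormed)

theorem OMatched.not_lt_left {s : Fin K} {i j j' : ℕ} (h1 : OMatched h lab s j i)
    (h2 : OMatched h lab s j' i) : ¬j < j' := by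
  intro hlt
  have hsplit : labelsIco lab (j + 1) j' ++ ([lab j'] ++ labelsIco lab (j' + 1) i) =
      labelsIco lab (j + 1) i := by
    rw [← labelsIco_succ, labelsIco_append j'.le_succ h2.1, labelsIco_append hlt h2.1.le]
  exact h2.wellFormed.false_of_call_append (disjoint_somes_callSet_retSet s) h2.2.1
    (hsplit ▸ h1.wellFormed)

theorem OMatched.right_unique {s s' : Fin K} {i j j' : ℕ} (h1 : OMatched h lab s i j)
    (h2 : OMatched h lab s' i j') : j = j' := by
  obtain rfl : s = s' := by
    simpa using (mem_somes_callSet.1 h1.2.1).symm.trans (mem_somes_callSet.1 h2.2.1)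
  exact le_antisymm (not_lt.1 (h2.not_lt_right h1)) (not_lt.1 (h1.not_lt_right h2))

theorem OMatched.left_unique {s s' : Fin K} {i j j' : ℕ} (h1 : OMatched h lab s j i)
    (h2 : OMatched h lab s' j' i) : j = j' := by
  obtain rfl : s = s' := by
    simpa using (mem_somes_retSet.1 h1.2.2.1).symm.trans (mem_somes_retSet.1 h2.2.2.1)
  exact le_antisymm (not_lt.1 (h2.not_lt_left h1)) (not_lt.1 (h1.not_lt_left h2))

theorem OMatched.not_oMatched_ret {s s' : Fin K} {i j k : ℕ} (h1 : OMatched h lab s i j) :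
    ¬OMatched h lab s' k i := fun h2 => by
  simpa using (mem_somes_callSet.1 h1.2.1).symm.trans (mem_somes_retSet.1 h2.2.2.1)

theorem subsingleton_oMatched_partners (i : ℕ) :
    {j | ∃ s, OMatched h lab s i j ∨ OMatched h lab s j i}.Subsingleton := by
  rintro j ⟨s, hj | hj⟩ j' ⟨s', hj' | hj'⟩
  · exact hj.right_unique hj'
  · exact (hj.not_oMatched_ret hj').elim
  · exact (hj'.not_oMatched_ret hj).elim
  · exact hj.left_unique hj'

theorem oball_one_subset (i : ℕ) :
    ∃ p, oball h lab 1 i ⊆ ({i, i + 1, i - 1, p} : Finset ℕ) := by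
  have hadj (p : ℕ) (hp : ∀ j, (∃ s, OMatched h lab s i j ∨ OMatched h lab s j i) → j = p) :
      oball h lab 1 i ⊆ ({i, i + 1, i - 1, p} : Finset ℕ) := by
    rintro j (rfl | ⟨j, hij, rfl⟩)
    · simp
    · rcases hij with ⟨rfl, -⟩ | ⟨rfl, -⟩ | hm
      · simp
      · simp
      · simp [hp _ hm]
  obtain he | ⟨p, hp⟩ :=
    (subsingleton_oMatched_partners (h := h) (lab := lab) i).eq_empty_or_singleton
  · exact ⟨i, hadj i fun j hj => absurd (he ▸ hj : j ∈ (∅ : Set ℕ)) id⟩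
  · exact ⟨p, hadj p fun j hj => (hp ▸ hj : j ∈ ({p} : Set ℕ))⟩

end NestedWord

section Gaifman

variable {K : ℕ} {A : Type} {h : CRAlphabet K A} {lab : ℕ → Option A}

theorem OAdj.symm {i j : ℕ} (hij : OAdj h lab i j) : OAdj h lab j i := by
  rcases hij with hs | hp | ⟨s, hm⟩
  · exact Or.inr (Or.inl hs)
  · exact Or.inl hp
  · exact Or.inr (Or.inr ⟨s, hm.symm⟩)

theorem OAdj.lab_ne_none (hdc : ∀ i j, i ≤ j → lab j ≠ none → lab i ≠ none) {i j : ℕ}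
    (hij : OAdj h lab i j) : lab j ≠ none := by
  rcases hij with ⟨-, hj⟩ | ⟨rfl, hi⟩ | ⟨s, ⟨-, -, ⟨b, -, hb⟩, -⟩ | ⟨-, ⟨a, -, ha⟩, -, -⟩⟩
  · exact hj
  · exact hdc j (j + 1) j.le_succ hi
  · simp [hb]
  · simp [ha]

theorem oDistLE_refl (d i : ℕ) : ODistLE h lab d i i := by
  cases d <;> simp [ODistLE]

theorem ODistLE.mono {d d' i j : ℕ} (hd : ODistLE h lab d i j) (hdd' : d ≤ d') :
    ODistLE h lab d' i j := by
  induction d generalizing d' i with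
  | zero => subst hd; exact oDistLE_refl d' i
  | succ d ih =>
    obtain ⟨d', rfl⟩ : ∃ e, d' = e + 1 := ⟨d' - 1, by omega⟩
    rcases hd with rfl | ⟨k, hik, hkj⟩
    · exact Or.inl rfl
    · exact Or.inr ⟨k, hik, ih hkj (by omega)⟩

theorem ODistLE.trans {a b i k j : ℕ} (hik : ODistLE h lab a i k) (hkj : ODistLE h lab b k j) :
    ODistLE h lab (a + b) i j := by
  induction a generalizing i with
  | zero => subst hik; simpa using hkj
  | succ a ih =>
    rw [Nat.add_right_comm]
    rcases hik with rfl | ⟨m, him, hmk⟩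
    · exact hkj.mono (by omega)
    · exact Or.inr ⟨m, him, ih hmk⟩

theorem ODistLE.exists_mid {a b i j : ℕ} (hij : ODistLE h lab (a + b) i j) :
    ∃ k, ODistLE h lab a i k ∧ ODistLE h lab b k j := by
  induction a generalizing i with
  | zero => exact ⟨i, rfl, by simpa using hij⟩
  | succ a ih =>
    rw [Nat.add_right_comm] at hij
    rcases hij with rfl | ⟨m, him, hmj⟩
    · exact ⟨i, oDistLE_refl _ _, oDistLE_refl _ _⟩
    · obtain ⟨k, hmk, hkj⟩ := ih hmj
      exact ⟨k, Or.inr ⟨m, him, hmk⟩, hkj⟩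

theorem ODistLE.symm {d i j : ℕ} (hij : ODistLE h lab d i j) : ODistLE h lab d j i := by
  induction d generalizing i with
  | zero => exact Eq.symm hij
  | succ d ih =>
    rcases hij with rfl | ⟨k, hik, hkj⟩
    · exact Or.inl rfl
    · exact (ih hkj).trans (b := 1) (Or.inr ⟨i, hik.symm, rfl⟩)

theorem oball_add (a b i : ℕ) :
    oball h lab (a + b) i = ⋃ k ∈ oball h lab a i, oball h lab b k := by
  ext j
  simp only [Set.mem_iUnion, exists_prop]
  exact ⟨ODistLE.exists_mid, fun ⟨_, hik, hkj⟩ => hik.trans hkj⟩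

theorem lab_ne_none_of_mem_oball (hdc : ∀ i j, i ≤ j → lab j ≠ none → lab i ≠ none)
    {d i j : ℕ} (hi : lab i ≠ none) (hj : j ∈ oball h lab d i) : lab j ≠ none := by
  induction d generalizing i with
  | zero => rwa [← hj]
  | succ d ih =>
    rcases hj with rfl | ⟨k, hik, hkj⟩
    · exact hi
    · exact ih (hik.lab_ne_none hdc) hkj

theorem ncard_oball_one_le (i : ℕ) : (oball h lab 1 i).ncard ≤ 4 := by
  obtain ⟨p, hp⟩ := oball_one_subset (h := h) (lab := lab) i
  exact (Set.ncard_le_ncard hp (Finset.finite_toSet _)).trans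
    ((Set.ncard_coe_finset _).trans_le Finset.card_le_four)

theorem oball_finite (d i : ℕ) : (oball h lab d i).Finite := by
  induction d generalizing i with
  | zero => exact (Set.finite_singleton i).subset fun j hj => (hj : i = j).symm
  | succ d ih =>
    rw [Nat.add_comm, oball_add]
    obtain ⟨p, hp⟩ := oball_one_subset (h := h) (lab := lab) i
    exact ((Finset.finite_toSet _).subset hp).biUnion fun k _ => ih k

theorem ncard_oball_two_mul_add_one_le (hdc : ∀ i j, i ≤ j → lab j ≠ none → lab i ≠ none)
    {r M : ℕ} (hM : ∀ i, lab i ≠ none → (oball h lab r i).ncard ≤ M) {i : ℕ} (hi : lab i ≠ none) :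
    (oball h lab (2 * r + 1) i).ncard ≤ 4 * M ^ 2 := by
  have hinner : ∀ k ∈ oball h lab 1 i,
      (⋃ m ∈ oball h lab r k, oball h lab r m).ncard ≤ M * M := fun k hk =>
    have hk := lab_ne_none_of_mem_oball hdc hi hk
    (Set.ncard_biUnion_le_mul (oball_finite r k) fun m hm =>
      hM m (lab_ne_none_of_mem_oball hdc hk hm)).trans (Nat.mul_le_mul_right M (hM k hk))
  calc (oball h lab (2 * r + 1) i).ncard
      = (⋃ k ∈ oball h lab 1 i, ⋃ m ∈ oball h lab r k, oball h lab r m).ncard := by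
        rw [show 2 * r + 1 = 1 + (r + r) by ring]
        simp_rw [oball_add]
    _ ≤ 4 * (M * M) :=
        (Set.ncard_biUnion_le_mul (oball_finite 1 i) hinner).trans
          (Nat.mul_le_mul_right _ (ncard_oball_one_le i))
    _ = 4 * M ^ 2 := by ring

end Gaifman

/-- in a (possibly infinite) nested word whose `r`-balls have at
most `M` elements, the `r`-overlap graph has degree at most `4·M²`;
consequently there is a proper coloring of the positions with `4·M²+1` colors
giving distinct colors to distinct `r`-overlapping positions. -/
theorem stmt4 {A : Type} (h : CRAlphabet 2 A) (lab : ℕ → Option A)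
    (hdc : ∀ i j, i ≤ j → lab j ≠ none → lab i ≠ none)
    (r M : ℕ) (hM : ∀ i, lab i ≠ none → (oball h lab r i).ncard ≤ M) :
    (∀ i, lab i ≠ none →
      {j | j ≠ i ∧ lab j ≠ none ∧ Overlap h lab r i j}.ncard ≤ 4 * M ^ 2) ∧
    ∃ χ : ℕ → Fin (4 * M ^ 2 + 1),
      ∀ i j, lab i ≠ none → lab j ≠ none → i ≠ j → Overlap h lab r i j →
        χ i ≠ χ j := by
  have hball {i : ℕ} (hi : lab i ≠ none) {s : Set ℕ} (hs : s ⊆ oball h lab (2 * r + 1) i) :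
      s.ncard ≤ 4 * M ^ 2 :=
    (Set.ncard_le_ncard hs (oball_finite _ i)).trans (ncard_oball_two_mul_add_one_le hdc hM hi)
  refine ⟨fun i hi => hball hi fun j hj => hj.2.2.2, ?_⟩
  let G := SimpleGraph.fromRel fun i j => lab i ≠ none ∧ lab j ≠ none ∧ Overlap h lab r i j
  have hdeg (v : ℕ) : (G.neighborSet v ∩ Set.Iio v).ncard ≤ 4 * M ^ 2 := by
    by_cases hv : lab v = none
    · have hempty : G.neighborSet v = ∅ := by
        ext w
        simp [G, hv]
      simp [hempty]
    · refine hball hv ?_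
      rintro w ⟨⟨-, ⟨-, -, hov⟩ | ⟨-, -, hov⟩⟩, -⟩
      exacts [hov.2, hov.2.symm]
  obtain ⟨χ⟩ := SimpleGraph.colorable_of_ncard_neighborSet_inter_Iio_le hdeg
  exact ⟨χ, fun i j hi hj hij hov => χ.valid ⟨hij, Or.inl ⟨hi, hj, hov⟩⟩⟩
end

section
/- Every generalized multi-stack nested-word automaton can be simulated by a multi-stack nested-word automaton without calling states: for every generalized MNWA B over a K-stack call-return alphabet there exists an MNWA B' (with empty set of calling states) over the same alphabet such that L(B') = L(B). Moreover, B' can be chosen with state set Q × {0,1,2}^[K] where Q is the state set of B. -/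
/-- A generalized multi-stack nested-word automaton (generalized MNWA) over a
`K`-stack call-return alphabet: `delta1` contains local/push/unmatched-return
transitions, `delta2` the transitions at matched returns (consulting also the
state reached at the matching call); `qC` is the set of calling states.  An
MNWA is a generalized MNWA with `qC = ∅`. -/
structure GMNWA (K : ℕ) (A : Type) (Q : Type) where
  delta1 : Q → A → Q → Prop
  delta2 : Q → Q → A → Q → Prop
  qI : Set Q
  qF : Set Q
  qC : Set Q

/-- `ρ` is a run of the generalized MNWA `B` on the (nonempty) nested word of
`w` (positions `0`-based). -/
def gRun {K : ℕ} {A Q : Type} (h : CRAlphabet K A) (B : GMNWA K A Q)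
    (w : List A) (ρ : ℕ → Q) : Prop :=
  (∃ q ∈ B.qI, ∃ a, w[0]? = some a ∧ B.delta1 q a (ρ 0)) ∧
  ∀ i, 0 < i → i < w.length → ∃ a, w[i]? = some a ∧
    ((∃ j, MuAny h w j i ∧ B.delta2 (ρ j) (ρ (i - 1)) a (ρ i)) ∨
     ((¬ ∃ j, MuAny h w j i) ∧ B.delta1 (ρ (i - 1)) a (ρ i)))

/-- The run `ρ` of `B` on `w` is accepting: it ends in a final state, and
every position carrying a calling state is a call with a matching return. -/
def gAcc {K : ℕ} {A Q : Type} (h : CRAlphabet K A) (B : GMNWA K A Q)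
    (w : List A) (ρ : ℕ → Q) : Prop :=
  ρ (w.length - 1) ∈ B.qF ∧ ∀ i < w.length, ρ i ∈ B.qC → ∃ j, MuAny h w i j

/-- The language of the generalized MNWA `B` (as a set of nonempty strings,
identified with their nested words via the canonical bijection). -/
def gLang {K : ℕ} {A Q : Type} (h : CRAlphabet K A) (B : GMNWA K A Q) :
    Set (List A) :=
  {w | w ≠ [] ∧ ∃ ρ, gRun h B w ρ ∧ gAcc h B w ρ}

/-!
The simulating automaton runs `B` and keeps one flag in `{0,1,2}` per stack. A calling-state
call of stack `s` is marked when no marked call of `s` is pending; the flag of `s` stays nonzero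
until the return matched to the marked call, which the matched-return transition recognises
because it sees the flags stored at the matching call. Every call strictly inside the matched
pair of a marked call is matched as well (the segment in between is well formed), so the
calling condition of `B` holds exactly when all flags are `0` at the end.
-/

open Classical

/-- `Matched h w s` is `IsMatchingPair (h.callSet s) (h.retSet s) w`, by definition. -/
def IsMatchingPair {A : Type} (c r : Set A) (u : List A) (i j : ℕ) : Prop :=
  i < j ∧ j < u.length ∧ (∃ a, u[i]? = some a ∧ a ∈ c) ∧ (∃ b, u[j]? = some b ∧ b ∈ r) ∧
  SWellFormed c r ((u.take j).drop (i + 1))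

section WellFormed

variable {A : Type} {c r : Set A} {u v : List A}

theorem SWellFormed.countP_eq (hcr : Disjoint c r) (hu : SWellFormed c r u) :
    u.countP (· ∈ c) = u.countP (· ∈ r) := by
  induction hu with
  | nil => rfl
  | single hc hr => simp [hc, hr]
  | wrap ha hb _ ih =>
    simp [ha, hb, Set.disjoint_left.1 hcr ha, Set.disjoint_right.1 hcr hb, ih]
  | concat _ _ ihu ihv => simp [ihu, ihv]

theorem SWellFormed.countP_take_le (hcr : Disjoint c r) (hu : SWellFormed c r u) (n : ℕ) :
    (u.take n).countP (· ∈ r) ≤ (u.take n).countP (· ∈ c) := by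
  induction hu generalizing n with
  | nil => simp
  | single hc hr => cases n <;> simp [hc, hr]
  | @wrap a b u ha hb hu ih =>
    cases n with
    | zero => simp
    | succ n =>
      have har := Set.disjoint_left.1 hcr ha
      rcases le_or_gt n u.length with hn | hn
      · rw [List.cons_append, List.take_succ_cons, List.take_append_of_le_length hn]
        simpa [ha, har] using (ih n).trans (Nat.le_succ _)
      · rw [List.take_of_length_le (by simp; omega)]
        simp [ha, hb, har, Set.disjoint_right.1 hcr hb, hu.countP_eq hcr]
  | concat _ _ ihu ihv =>
    rw [List.take_append, List.countP_append, List.countP_append]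
    exact Nat.add_le_add (ihu n) (ihv _)

theorem SWellFormed.countP_drop_le (hcr : Disjoint c r) (hu : SWellFormed c r u) (n : ℕ) :
    (u.drop n).countP (· ∈ c) ≤ (u.drop n).countP (· ∈ r) := by
  have hsplit (p : A → Bool) : (u.take n).countP p + (u.drop n).countP p = u.countP p := by
    rw [← List.countP_append, List.take_append_drop]
  have := hsplit (· ∈ c)
  have := hsplit (· ∈ r)
  have := hu.countP_eq hcr
  have := hu.countP_take_le hcr n
  omega

namespace IsMatchingPair

theorem right_unique (hcr : Disjoint c r) {i j₁ j₂ : ℕ} (h₁ : IsMatchingPair c r u i j₁)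
    (h₂ : IsMatchingPair c r u i j₂) : j₁ = j₂ := by
  wlog hlt : j₁ < j₂ generalizing j₁ j₂
  · rcases (not_lt.1 hlt).eq_or_lt with h | h
    · exact h.symm
    · exact (this h₂ h₁ h).symm
  obtain ⟨hi₁, hj₁, -, ⟨b, hb, hbr⟩, hwf₁⟩ := h₁
  obtain ⟨-, -, -, -, hwf₂⟩ := h₂
  -- the segment of the outer pair, cut just after `j₁`, has more returns than calls
  have hpre : ((u.take j₂).drop (i + 1)).take (j₁ - i) = (u.take j₁).drop (i + 1) ++ [b] := by
    rw [List.take_drop, show i + 1 + (j₁ - i) = j₁ + 1 by omega, List.take_take,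
      min_eq_left (by omega), List.take_add_one, hb, List.drop_append_of_le_length (by simp; omega)]
    rfl
  have hle := hwf₂.countP_take_le hcr (j₁ - i)
  rw [hpre] at hle
  have := hwf₁.countP_eq hcr
  simp [hbr, Set.disjoint_right.1 hcr hbr] at hle
  omega

theorem left_unique (hcr : Disjoint c r) {i₁ i₂ j : ℕ} (h₁ : IsMatchingPair c r u i₁ j)
    (h₂ : IsMatchingPair c r u i₂ j) : i₁ = i₂ := by
  wlog hlt : i₁ < i₂ generalizing i₁ i₂
  · rcases (not_lt.1 hlt).eq_or_lt with h | h
    · exact h.symm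
    · exact (this h₂ h₁ h).symm
  obtain ⟨-, hj, -, -, hwf₁⟩ := h₁
  obtain ⟨hi₂, -, ⟨a, ha, hac⟩, -, hwf₂⟩ := h₂
  -- the segment of the outer pair, cut just before `i₂`, has more calls than returns
  have hsuf : ((u.take j).drop (i₁ + 1)).drop (i₂ - i₁ - 1) = a :: (u.take j).drop (i₂ + 1) := by
    rw [List.drop_drop, show i₁ + 1 + (i₂ - i₁ - 1) = i₂ by omega,
      List.drop_eq_getElem_cons (by simp; omega)]
    congr 1
    rw [List.getElem_take]
    exact (List.getElem?_eq_some_iff.1 ha).2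
  have hle := hwf₁.countP_drop_le hcr (i₂ - i₁ - 1)
  rw [hsuf] at hle
  have := hwf₂.countP_eq hcr
  simp [hac, Set.disjoint_left.1 hcr hac] at hle
  omega

theorem append_right {i j : ℕ} (hm : IsMatchingPair c r u i j) (v : List A) :
    IsMatchingPair c r (u ++ v) i j := by
  obtain ⟨hij, hj, ⟨a, ha, hac⟩, ⟨b, hb, hbr⟩, hwf⟩ := hm
  refine ⟨hij, by simp; omega, ⟨a, ?_, hac⟩, ⟨b, ?_, hbr⟩, ?_⟩
  · rwa [List.getElem?_append_left (by omega)]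
  · rwa [List.getElem?_append_left hj]
  · rwa [List.take_append_of_le_length hj.le]

theorem append_left {i j : ℕ} (hm : IsMatchingPair c r v i j) (u : List A) :
    IsMatchingPair c r (u ++ v) (u.length + i) (u.length + j) := by
  obtain ⟨hij, hj, ⟨a, ha, hac⟩, ⟨b, hb, hbr⟩, hwf⟩ := hm
  refine ⟨by omega, by simp; omega, ⟨a, ?_, hac⟩, ⟨b, ?_, hbr⟩, ?_⟩
  · rwa [List.getElem?_append_right (by omega), Nat.add_sub_cancel_left]
  · rwa [List.getElem?_append_right (by omega), Nat.add_sub_cancel_left]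
  · rwa [List.take_length_add_append, Nat.add_assoc, List.drop_length_add_append]

end IsMatchingPair

theorem SWellFormed.exists_isMatchingPair (hcr : Disjoint c r) (hu : SWellFormed c r u) {k : ℕ}
    {x : A} (hk : u[k]? = some x) (hx : x ∈ c) : ∃ l, IsMatchingPair c r u k l := by
  induction hu generalizing k with
  | nil => simp at hk
  | single hc _ =>
    cases k with
    | zero => exact absurd ((Option.some_inj.1 hk) ▸ hx) hc
    | succ n => simp at hk
  | @wrap a b u ha hb hu ih =>
    cases k with
    | zero =>
      refine ⟨u.length + 1, by omega, by simp, ⟨a, rfl, ha⟩, ⟨b, by simp, hb⟩, ?_⟩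
      rw [List.take_append_of_le_length (by simp), List.take_of_length_le (by simp)]
      simpa using hu
    | succ n =>
      rcases lt_trichotomy n u.length with hn | rfl | hn
      · obtain ⟨l, hl⟩ := ih (by simpa [List.getElem?_append_left hn] using hk)
        exact ⟨l + 1, by simpa [Nat.add_comm] using (hl.append_right [b]).append_left [a]⟩
      · obtain rfl : b = x := by simpa using hk
        exact absurd hb (Set.disjoint_left.1 hcr hx)
      · rw [List.getElem?_eq_none (by simp; omega)] at hk
        cases hk
  | @concat u v _ _ ihu ihv =>
    rcases lt_or_ge k u.length with hk' | hk'
    · rw [List.getElem?_append_left hk'] at hk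
      obtain ⟨l, hl⟩ := ihu hk
      exact ⟨l, hl.append_right v⟩
    · rw [List.getElem?_append_right hk'] at hk
      obtain ⟨l, hl⟩ := ihv hk
      exact ⟨_, by simpa [Nat.add_sub_cancel' hk'] using hl.append_left u⟩

theorem IsMatchingPair.exists_inner (hcr : Disjoint c r) {i j p : ℕ}
    (hm : IsMatchingPair c r u i j) (hip : i < p) (hpj : p < j) {x : A} (hp : u[p]? = some x)
    (hx : x ∈ c) : ∃ l, IsMatchingPair c r u p l := by
  obtain ⟨-, hj, -, -, hwf⟩ := hm
  rw [List.drop_take] at hwf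
  have hxk : ((u.drop (i + 1)).take (j - (i + 1)))[p - (i + 1)]? = some x := by
    rw [List.getElem?_take_of_lt (by omega), List.getElem?_drop, Nat.add_sub_cancel' hip]
    exact hp
  obtain ⟨l, hl⟩ := hwf.exists_isMatchingPair hcr hxk hx
  have hl' := (hl.append_right ((u.drop (i + 1)).drop (j - (i + 1)))).append_left (u.take (i + 1))
  rw [List.take_append_drop, List.take_append_drop, List.length_take_of_le (by omega),
    Nat.add_sub_cancel' hip] at hl'
  exact ⟨_, hl'⟩

end WellFormed

section Alphabet

variable {K : ℕ} {A : Type} {h : CRAlphabet K A} {w : List A}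

theorem CRAlphabet.disjoint_callSet_retSet (h : CRAlphabet K A) (s : Fin K) :
    Disjoint (h.callSet s) (h.retSet s) :=
  Set.disjoint_left.2 fun x hc hr => by
    have : CRKind.call s = .ret s := (hc : h.kind x = _).symm.trans hr
    cases this

namespace Matched

variable {s : Fin K} {i j : ℕ} {a : A}

theorem kind_call (hm : Matched h w s i j) (ha : w[i]? = some a) : h.kind a = .call s := by
  obtain ⟨-, -, ⟨x, hx, hxc⟩, -⟩ := hm
  rw [ha, Option.some_inj] at hx
  exact hx ▸ hxc

theorem kind_ret (hm : Matched h w s i j) (ha : w[j]? = some a) : h.kind a = .ret s := by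
  obtain ⟨-, -, -, ⟨x, hx, hxr⟩, -⟩ := hm
  rw [ha, Option.some_inj] at hx
  exact hx ▸ hxr

theorem right_unique {j' : ℕ} (hm : Matched h w s i j) (hm' : Matched h w s i j') : j = j' :=
  IsMatchingPair.right_unique (h.disjoint_callSet_retSet s) hm hm'

theorem exists_inner (hm : Matched h w s i j) {p : ℕ} (hip : i < p) (hpj : p < j)
    (hp : w[p]? = some a) (hk : h.kind a = .call s) : ∃ l, Matched h w s p l :=
  IsMatchingPair.exists_inner (h.disjoint_callSet_retSet s) hm hip hpj hp hk

end Matched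

theorem MuAny.lt {i j : ℕ} (hm : MuAny h w i j) : i < j :=
  hm.elim fun _ hm => hm.1

theorem MuAny.left_unique {i i' j : ℕ} (hm : MuAny h w i j) (hm' : MuAny h w i' j) : i = i' := by
  obtain ⟨s, hm⟩ := hm
  obtain ⟨s', hm'⟩ := hm'
  obtain rfl : s = s' := by
    have hb := List.getElem?_eq_getElem hm.2.1
    have := (hm.kind_ret hb).symm.trans (hm'.kind_ret hb)
    injection this
  exact IsMatchingPair.left_unique (h.disjoint_callSet_retSet s) hm hm'

end Alphabet

section Construction

variable {K : ℕ} {A Q : Type}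

/- The flag of stack `s` is `2` at a calling-state call of stack `s` that gets marked (only
when no marked call of `s` is pending), `1` while that call stays pending, and `0` once its
matching return has been read or when no call of `s` is marked. -/
def tick (x : Fin 3) : Fin 3 := if x = 2 then 1 else x

theorem tick_ne_two (x : Fin 3) : tick x ≠ 2 := by
  unfold tick; split_ifs <;> simp_all

theorem tick_eq_zero_iff {x : Fin 3} : tick x = 0 ↔ x = 0 := by
  unfold tick; split_ifs <;> simp_all

noncomputable def openFlags (h : CRAlphabet K A) (C : Set Q) (f : Fin K → Fin 3) (a : A)
    (q : Q) : Fin K → Fin 3 :=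
  fun s => if q ∈ C ∧ h.kind a = .call s ∧ f s = 0 then 2 else tick (f s)

/-- `g` is the flag vector at the matching call. -/
noncomputable def closeFlags (h : CRAlphabet K A) (f g : Fin K → Fin 3) (a : A) :
    Fin K → Fin 3 :=
  fun s => if h.kind a = .ret s ∧ g s = 2 then 0 else tick (f s)

noncomputable def GMNWA.toMNWA (h : CRAlphabet K A) (B : GMNWA K A Q) :
    GMNWA K A (Q × (Fin K → Fin 3)) where
  delta1 p a p' := B.delta1 p.1 a p'.1 ∧ (p'.1 ∈ B.qC → ∃ s, h.kind a = .call s) ∧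
    p'.2 = openFlags h B.qC p.2 a p'.1
  delta2 pc p a p' := B.delta2 pc.1 p.1 a p'.1 ∧ p'.1 ∉ B.qC ∧ p'.2 = closeFlags h p.2 pc.2 a
  qI := {p | p.1 ∈ B.qI ∧ p.2 = 0}
  qF := {p | p.1 ∈ B.qF ∧ p.2 = 0}
  qC := ∅

def flagsBefore (ρ' : ℕ → Q × (Fin K → Fin 3)) : ℕ → Fin K → Fin 3
  | 0 => 0
  | n + 1 => (ρ' n).2

variable {h : CRAlphabet K A} {B : GMNWA K A Q} {w : List A} {ρ' : ℕ → Q × (Fin K → Fin 3)}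

theorem not_muAny_zero : ¬ ∃ j, MuAny h w j 0 :=
  fun ⟨_, hj⟩ => Nat.not_lt_zero _ hj.lt

theorem gRun.fst_of_toMNWA (hρ' : gRun h (B.toMNWA h) w ρ') : gRun h B w (fun i => (ρ' i).1) := by
  obtain ⟨⟨q, ⟨hq, -⟩, a, ha, hδ, -⟩, hstep⟩ := hρ'
  refine ⟨⟨q.1, hq, a, ha, hδ⟩, fun i hi hil => ?_⟩
  obtain ⟨a, ha, ⟨j, hj, hδ, -⟩ | ⟨hnr, hδ, -⟩⟩ := hstep i hi hil
  · exact ⟨a, ha, .inl ⟨j, hj, hδ⟩⟩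
  · exact ⟨a, ha, .inr ⟨hnr, hδ⟩⟩

theorem toMNWA_run_step (hρ' : gRun h (B.toMNWA h) w ρ') {i : ℕ} (hi : i < w.length) :
    ∃ a, w[i]? = some a ∧
      ((∃ j, MuAny h w j i ∧ (ρ' i).1 ∉ B.qC ∧
          (ρ' i).2 = closeFlags h (flagsBefore ρ' i) (ρ' j).2 a) ∨
        ((¬ ∃ j, MuAny h w j i) ∧ ((ρ' i).1 ∈ B.qC → ∃ s, h.kind a = .call s) ∧
          (ρ' i).2 = openFlags h B.qC (flagsBefore ρ' i) a (ρ' i).1)) := by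
  cases i with
  | zero =>
    obtain ⟨q, ⟨-, hq⟩, a, ha, -, hcall, hflags⟩ := hρ'.1
    exact ⟨a, ha, .inr ⟨not_muAny_zero, hcall, by rwa [hq] at hflags⟩⟩
  | succ n =>
    obtain ⟨a, ha, ⟨j, hj, -, hq, hflags⟩ | ⟨hnr, -, hcall, hflags⟩⟩ :=
      hρ'.2 (n + 1) n.succ_pos hi
    · exact ⟨a, ha, .inl ⟨j, hj, hq, hflags⟩⟩
    · exact ⟨a, ha, .inr ⟨hnr, hcall, hflags⟩⟩

end Construction

section Flags

variable {K : ℕ} {A Q : Type} {h : CRAlphabet K A} {B : GMNWA K A Q} {w : List A}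
  {ρ' : ℕ → Q × (Fin K → Fin 3)}

theorem toMNWA_flag_cases (hρ' : gRun h (B.toMNWA h) w ρ') {i : ℕ} (hi : i < w.length)
    (s : Fin K) :
    ((ρ' i).2 s = 2 ∧ flagsBefore ρ' i s = 0 ∧ (ρ' i).1 ∈ B.qC ∧
        ∃ a, w[i]? = some a ∧ h.kind a = .call s) ∨
      ((ρ' i).2 s = tick (flagsBefore ρ' i s) ∧ ∀ b, Matched h w s b i → (ρ' b).2 s ≠ 2) ∨
      ((ρ' i).2 s = 0 ∧ ∃ j, Matched h w s j i ∧ (ρ' j).2 s = 2) := by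
  obtain ⟨a, ha, ⟨j, hj, -, hflags⟩ | ⟨hnr, -, hflags⟩⟩ := toMNWA_run_step hρ' hi
  · have hflag := congrFun hflags s
    unfold closeFlags at hflag
    split_ifs at hflag with hclose
    · obtain ⟨s', hm⟩ := hj
      obtain rfl : s' = s := by
        have := (hm.kind_ret ha).symm.trans hclose.1
        injection this
      exact .inr (.inr ⟨hflag, j, hm, hclose.2⟩)
    · refine .inr (.inl ⟨hflag, fun b hm hb => hclose ⟨hm.kind_ret ha, ?_⟩⟩)
      rwa [← MuAny.left_unique ⟨s, hm⟩ hj]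
  · have hflag := congrFun hflags s
    unfold openFlags at hflag
    split_ifs at hflag with hmark
    · exact .inl ⟨hflag, hmark.2.2, hmark.1, a, ha, hmark.2.1⟩
    · exact .inr (.inl ⟨hflag, fun b hm => absurd ⟨b, s, hm⟩ hnr⟩)

theorem toMNWA_of_flag_eq_two (hρ' : gRun h (B.toMNWA h) w ρ') {b : ℕ} (hb : b < w.length)
    {s : Fin K} (h2 : (ρ' b).2 s = 2) :
    (ρ' b).1 ∈ B.qC ∧ ∃ a, w[b]? = some a ∧ h.kind a = .call s := by
  rcases toMNWA_flag_cases hρ' hb s with ⟨-, -, hmark⟩ | ⟨htick, -⟩ | ⟨hclose, -⟩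
  · exact hmark
  · exact absurd (htick ▸ h2) (tick_ne_two _)
  · exact absurd (hclose ▸ h2) (by decide)

variable (h w ρ') in
def openMarks (s : Fin K) (i : ℕ) : Set ℕ :=
  {b | b < i ∧ (ρ' b).2 s = 2 ∧ ∀ r < i, ¬ Matched h w s b r}

theorem openMarks_succ (s : Fin K) (i : ℕ) :
    openMarks h w ρ' s (i + 1) =
      {b ∈ openMarks h w ρ' s i | ¬ Matched h w s b i} ∪ {b | b = i ∧ (ρ' i).2 s = 2} := by
  ext b
  simp only [openMarks, Set.mem_union, Set.mem_ofPred_eq, Nat.lt_succ_iff_lt_or_eq]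
  constructor
  · rintro ⟨hb | rfl, h2, hnm⟩
    · exact .inl ⟨⟨hb, h2, fun r hr => hnm r (.inl hr)⟩, hnm i (.inr rfl)⟩
    · exact .inr ⟨rfl, h2⟩
  · rintro (⟨⟨hb, h2, hnm⟩, hi⟩ | ⟨rfl, h2⟩)
    · exact ⟨.inl hb, h2, fun r => by rintro (hr | rfl) <;> [exact hnm r hr; exact hi]⟩
    · exact ⟨.inr rfl, h2, fun r hr hm => by rcases hr with hr | hr <;> have := hm.1 <;> omega⟩

theorem toMNWA_flagsBefore_invariant (hρ' : gRun h (B.toMNWA h) w ρ') (s : Fin K) :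
    ∀ i ≤ w.length, (flagsBefore ρ' i s = 0 ↔ openMarks h w ρ' s i = ∅) ∧
      (openMarks h w ρ' s i).Subsingleton := by
  intro i
  induction i with
  | zero => simp [flagsBefore, openMarks]
  | succ i ih =>
    intro hi
    obtain ⟨hzero, hsub⟩ := ih (by omega)
    show ((ρ' i).2 s = 0 ↔ _) ∧ _
    rw [openMarks_succ]
    rcases toMNWA_flag_cases hρ' hi s with ⟨hmark, hbefore, -⟩ | ⟨htick, hnm⟩ | ⟨hclose, j, hj, h2⟩
    · simp [hzero.1 hbefore, hmark]
    · have hkeep : {b ∈ openMarks h w ρ' s i | ¬ Matched h w s b i} = openMarks h w ρ' s i :=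
        Set.sep_eq_self_iff_mem_true.2 fun b hb hm => hnm b hm hb.2.1
      have hnew : {b | b = i ∧ (ρ' i).2 s = 2} = ∅ := by
        simp [htick, tick_ne_two]
      rw [hkeep, hnew, Set.union_empty, htick, tick_eq_zero_iff]
      exact ⟨hzero, hsub⟩
    · have hj_open : j ∈ openMarks h w ρ' s i :=
        ⟨hj.1, h2, fun r hr hm => hr.ne (hj.right_unique hm).symm⟩
      have hclosed : {b ∈ openMarks h w ρ' s i | ¬ Matched h w s b i} = ∅ :=
        Set.eq_empty_of_forall_notMem fun b ⟨hb, hnm⟩ => hnm (hsub hb hj_open ▸ hj)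
      simp [hclosed, hclose]

theorem toMNWA_flags_last_eq_zero_iff (hρ' : gRun h (B.toMNWA h) w ρ') (hw : w ≠ [])
    (s : Fin K) :
    (ρ' (w.length - 1)).2 s = 0 ↔
      ∀ b < w.length, (ρ' b).2 s = 2 → ∃ r, Matched h w s b r := by
  obtain ⟨n, hn⟩ : ∃ n, w.length = n + 1 := Nat.exists_eq_succ_of_ne_zero (by simpa using hw)
  rw [hn, Nat.add_sub_cancel]
  refine ((toMNWA_flagsBefore_invariant hρ' s (n + 1) hn.ge).1.trans
    Set.eq_empty_iff_forall_notMem).trans (forall_congr' fun b => ?_)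
  simp only [openMarks, Set.mem_ofPred_eq, not_and, not_forall, not_not]
  refine forall_congr' fun hb => imp_congr_right fun _ => ⟨fun ⟨r, _, hm⟩ => ⟨r, hm⟩, ?_⟩
  rintro ⟨r, hm⟩
  exact ⟨r, hn ▸ hm.2.1, hm⟩

end Flags

section Languages

variable {K : ℕ} {A Q : Type} {h : CRAlphabet K A} {B : GMNWA K A Q} {w : List A}

/-- A calling call either gets marked, and the final flag `0` forces its return, or it lies
inside a pending marked call of the same stack, whose matched pair then contains it. -/
theorem toMNWA_exists_muAny_of_mem_qC {ρ' : ℕ → Q × (Fin K → Fin 3)}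
    (hρ' : gRun h (B.toMNWA h) w ρ')
    (hmarked : ∀ s, ∀ b < w.length, (ρ' b).2 s = 2 → ∃ r, Matched h w s b r)
    {i : ℕ} (hi : i < w.length) (hq : (ρ' i).1 ∈ B.qC) : ∃ j, MuAny h w i j := by
  obtain ⟨a, ha, ⟨-, -, hq', -⟩ | ⟨-, hcall, hflags⟩⟩ := toMNWA_run_step hρ' hi
  · exact absurd hq hq'
  obtain ⟨s, hk⟩ := hcall hq
  by_cases hbefore : flagsBefore ρ' i s = 0
  · have h2 : (ρ' i).2 s = 2 := by
      rw [hflags, openFlags, if_pos ⟨hq, hk, hbefore⟩]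
    obtain ⟨r, hm⟩ := hmarked s i hi h2
    exact ⟨r, s, hm⟩
  obtain ⟨b, hbi, h2, hopen⟩ := Set.nonempty_iff_ne_empty.2 <|
    (not_congr (toMNWA_flagsBefore_invariant hρ' s i hi.le).1).1 hbefore
  obtain ⟨r, hm⟩ := hmarked s b (hbi.trans hi) h2
  have hir : i < r := by
    refine lt_of_le_of_ne (not_lt.1 fun hri => hopen r hri hm) fun hir => ?_
    have := (hm.kind_ret (hir ▸ ha)).symm.trans hk
    cases this
  obtain ⟨l, hl⟩ := hm.exists_inner hbi hir ha hk
  exact ⟨l, s, hl⟩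

theorem gLang_toMNWA_subset : gLang h (B.toMNWA h) ⊆ gLang h B := by
  rintro w ⟨hw, ρ', hρ', ⟨hfinal, hflags⟩, -⟩
  refine ⟨hw, fun i => (ρ' i).1, hρ'.fst_of_toMNWA, hfinal, fun i hi hq => ?_⟩
  refine toMNWA_exists_muAny_of_mem_qC hρ' (fun s => ?_) hi hq
  exact (toMNWA_flags_last_eq_zero_iff hρ' hw s).1 (congrFun hflags s)

variable (h B w) in
noncomputable def runFlags (ρ : ℕ → Q) (i : ℕ) : Fin K → Fin 3 :=
  let before : Fin K → Fin 3 := if 0 < i then runFlags ρ (i - 1) else 0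
  match w[i]? with
  | none => 0
  | some a =>
    if hr : ∃ j, MuAny h w j i then closeFlags h before (runFlags ρ (Classical.choose hr)) a
    else openFlags h B.qC before a (ρ i)
termination_by i
decreasing_by
  · omega
  · exact (Classical.choose_spec hr).lt

variable {ρ : ℕ → Q} {i : ℕ} {a : A}

theorem runFlags_eq (ha : w[i]? = some a) :
    runFlags h B w ρ i =
      if hr : ∃ j, MuAny h w j i then
        closeFlags h (flagsBefore (fun n => (ρ n, runFlags h B w ρ n)) i)
          (runFlags h B w ρ (Classical.choose hr)) a
      else openFlags h B.qC (flagsBefore (fun n => (ρ n, runFlags h B w ρ n)) i) a (ρ i) := by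
  rw [runFlags]
  cases i <;> simp only [ha] <;> rfl

theorem runFlags_of_muAny (ha : w[i]? = some a) {j : ℕ} (hj : MuAny h w j i) :
    runFlags h B w ρ i = closeFlags h (flagsBefore (fun n => (ρ n, runFlags h B w ρ n)) i)
      (runFlags h B w ρ j) a := by
  have hr : ∃ j, MuAny h w j i := ⟨j, hj⟩
  rw [runFlags_eq ha, dif_pos hr, (Classical.choose_spec hr).left_unique hj]

theorem runFlags_of_not_muAny (ha : w[i]? = some a) (hnr : ¬ ∃ j, MuAny h w j i) :
    runFlags h B w ρ i =
      openFlags h B.qC (flagsBefore (fun n => (ρ n, runFlags h B w ρ n)) i) a (ρ i) := by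
  rw [runFlags_eq ha, dif_neg hnr]

theorem gAcc.exists_kind_eq_call (hacc : gAcc h B w ρ) (hi : i < w.length) (hq : ρ i ∈ B.qC)
    (ha : w[i]? = some a) : ∃ s, h.kind a = .call s := by
  obtain ⟨j, s, hm⟩ := hacc.2 i hi hq
  exact ⟨s, hm.kind_call ha⟩

theorem gRun.toMNWA_runFlags (hρ : gRun h B w ρ) (hacc : gAcc h B w ρ) :
    gRun h (B.toMNWA h) w (fun n => (ρ n, runFlags h B w ρ n)) := by
  obtain ⟨⟨q, hq, a, ha, hδ⟩, hstep⟩ := hρ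
  have hw : 0 < w.length := (List.getElem?_eq_some_iff.1 ha).1
  refine ⟨⟨(q, 0), ⟨hq, rfl⟩, a, ha, hδ, fun hq => hacc.exists_kind_eq_call hw hq ha,
    runFlags_of_not_muAny ha not_muAny_zero⟩, fun i hi hil => ?_⟩
  obtain ⟨n, rfl⟩ : ∃ n, i = n + 1 := Nat.exists_eq_succ_of_ne_zero hi.ne'
  obtain ⟨a, ha, ⟨j, hj, hδ⟩ | ⟨hnr, hδ⟩⟩ := hstep (n + 1) hi hil
  · refine ⟨a, ha, .inl ⟨j, hj, hδ, fun hq => ?_, runFlags_of_muAny ha hj⟩⟩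
    obtain ⟨s, hk⟩ := hacc.exists_kind_eq_call hil hq ha
    obtain ⟨s', hm⟩ := hj
    have := (hm.kind_ret ha).symm.trans hk
    cases this
  · exact ⟨a, ha, .inr ⟨hnr, hδ, fun hq => hacc.exists_kind_eq_call hil hq ha,
      runFlags_of_not_muAny ha hnr⟩⟩

theorem gLang_subset_gLang_toMNWA : gLang h B ⊆ gLang h (B.toMNWA h) := by
  rintro w ⟨hw, ρ, hρ, hacc⟩
  have hρ' := hρ.toMNWA_runFlags hacc
  refine ⟨hw, _, hρ', ⟨hacc.1, funext fun s => ?_⟩, fun _ _ hq => hq.elim⟩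
  refine (toMNWA_flags_last_eq_zero_iff hρ' hw s).2 fun b hb h2 => ?_
  obtain ⟨hq, a, ha, hk⟩ := toMNWA_of_flag_eq_two hρ' hb h2
  obtain ⟨r, s', hm⟩ := hacc.2 b hb hq
  obtain rfl : s' = s := by
    have := (hm.kind_call ha).symm.trans hk
    injection this
  exact ⟨r, hm⟩

end Languages

/-- every generalized MNWA `B` can be simulated by an MNWA
(a generalized MNWA without calling states) `B'` with state set
`Q × {0,1,2}^[K]` recognizing the same language. -/
theorem stmt7 {K : ℕ} {A Q : Type} (h : CRAlphabet K A) (B : GMNWA K A Q) :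
    ∃ B' : GMNWA K A (Q × (Fin K → Fin 3)),
      B'.qC = ∅ ∧ gLang h B' = gLang h B :=
  ⟨B.toMNWA h, rfl, gLang_toMNWA_subset.antisymm gLang_subset_gLang_toMNWA⟩
end

section
/- MVPA and MNWA are expressively equivalent: for a set L of nested words over a K-stack call-return alphabet, there exists a multi-stack visibly pushdown automaton recognizing L if and only if there exists a multi-stack nested-word automaton recognizing L. -/
/-- A multi-stack visibly pushdown automaton over a `K`-stack call-return
alphabet, with states `Q` and stack alphabet `Γ` (the bottom symbol `⊥` is
represented implicitly: a stack contents is a list over `Γ`, the empty list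
standing for the stack containing only `⊥`; in pop transitions the stack
symbol `none` stands for `⊥`). -/
structure MVPA (K : ℕ) (A Q Γ : Type) where
  pushT : Q → A → Γ → Q → Prop
  popT : Q → A → Option Γ → Q → Prop
  intT : Q → A → Q → Prop
  qI : Set Q
  qF : Set Q

/-- One step of the MVPA `M` reading letter `a`, from configuration `c` to
configuration `c'` (a configuration is a state together with one stack
contents per stack). -/
def vStep {K : ℕ} {A Q Γ : Type} (h : CRAlphabet K A) (M : MVPA K A Q Γ)
    (a : A) (c c' : Q × (Fin K → List Γ)) : Prop :=
  (∃ s, h.kind a = .call s ∧ ∃ g, M.pushT c.1 a g c'.1 ∧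
     c'.2 s = g :: c.2 s ∧ ∀ t, t ≠ s → c'.2 t = c.2 t) ∨
  (∃ s, h.kind a = .ret s ∧ (∀ t, t ≠ s → c'.2 t = c.2 t) ∧
     ((∃ g, M.popT c.1 a (some g) c'.1 ∧ c.2 s = g :: c'.2 s) ∨
      (M.popT c.1 a none c'.1 ∧ c.2 s = [] ∧ c'.2 s = []))) ∨
  (h.kind a = .int ∧ M.intT c.1 a c'.1 ∧ c'.2 = c.2)

/-- The MVPA `M` accepts the string `w`: some run starting in an initial state
with all stacks empty and ending in a final state. -/
def vAccepts {K : ℕ} {A Q Γ : Type} (h : CRAlphabet K A) (M : MVPA K A Q Γ)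
    (w : List A) : Prop :=
  ∃ f : ℕ → Q × (Fin K → List Γ),
    (f 0).1 ∈ M.qI ∧ (∀ s, (f 0).2 s = []) ∧
    (∀ i a, w[i]? = some a → vStep h M a (f i) (f (i + 1))) ∧
    (f w.length).1 ∈ M.qF

/-- The language of the MVPA `M` (nonempty strings, identified with their
nested words). -/
def vLang {K : ℕ} {A Q Γ : Type} (h : CRAlphabet K A) (M : MVPA K A Q Γ) :
    Set (List A) :=
  {w | w ≠ [] ∧ vAccepts h M w}

/-!
Along an `s`-well-formed factor the stack `s` of an MVPA returns to its initial contents, and a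
nonempty stack always has a pending call. Hence at a matched return the top of the stack is the
symbol pushed at the matching call, and at an unmatched return the stack is empty: a run is
determined by its control states and the symbols it pushes. An MNWA whose states also guess the
pushed symbols therefore simulates the MVPA, reading the symbol back at a matched return from the
state at the call; conversely an MVPA simulates an MNWA by pushing, at each call, the state it
reaches there.
-/

namespace List

variable {α : Type*}

def segment (w : List α) (l m : ℕ) : List α := (w.take m).drop l

theorem segment_self (w : List α) (l : ℕ) : w.segment l l = [] := by
  simp [segment]

theorem segment_succ {w : List α} {t : ℕ} {x : α} (hx : w[t]? = some x) :
    w.segment t (t + 1) = [x] := by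
  obtain ⟨ht, rfl⟩ := getElem?_eq_some_iff.mp hx
  rw [segment, drop_take, Nat.add_sub_cancel_left, drop_eq_getElem_cons ht]
  rfl

theorem segment_append (w : List α) {l t m : ℕ} (hlt : l ≤ t) (htm : t ≤ m) :
    w.segment l m = w.segment l t ++ w.segment t m := by
  simp only [segment, drop_take]
  rw [show m - l = (t - l) + (m - t) by omega, take_add, drop_drop,
    show l + (t - l) = t by omega]

theorem getElem?_add_of_segment {w : List α} {l m k : ℕ} {x : α}
    (hx : (w.segment l m)[k]? = some x) :
    w[l + k]? = some x := by
  simp only [segment, getElem?_drop, getElem?_take] at hx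
  split_ifs at hx
  exact hx

theorem length_segment {w : List α} {l m : ℕ} (hm : m ≤ w.length) :
    (w.segment l m).length = m - l := by
  simp [segment, hm]

end List

section StackRun

variable {A Γ : Type} {c r : Set A}

/-- `σ.tail` also covers a return reading `⊥` on the empty stack. -/
def StackStep (c r : Set A) (a : A) (σ σ' : List Γ) : Prop :=
  a ∈ c ∧ (∃ g, σ' = g :: σ) ∨ a ∈ r ∧ σ' = σ.tail ∨ a ∉ c ∧ a ∉ r ∧ σ' = σ

namespace StackStep

variable {a : A} {σ σ' : List Γ}

theorem eq_cons (hcr : Disjoint c r) (ha : a ∈ c) (hs : StackStep c r a σ σ') :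
    ∃ g, σ' = g :: σ := by
  rcases hs with ⟨-, hs⟩ | ⟨ha', -⟩ | ⟨ha', -⟩
  · exact hs
  · exact absurd ha' (Set.disjoint_left.mp hcr ha)
  · exact absurd ha ha'

theorem eq_tail (hcr : Disjoint c r) (ha : a ∈ r) (hs : StackStep c r a σ σ') :
    σ' = σ.tail := by
  rcases hs with ⟨ha', -⟩ | ⟨-, hs⟩ | ⟨-, ha', -⟩
  · exact absurd ha (Set.disjoint_left.mp hcr ha')
  · exact hs
  · exact absurd ha ha'

theorem eq_self (hc : a ∉ c) (hr : a ∉ r) (hs : StackStep c r a σ σ') : σ' = σ := by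
  rcases hs with ⟨ha, -⟩ | ⟨ha, -⟩ | ⟨-, -, hs⟩
  · exact absurd ha hc
  · exact absurd ha hr
  · exact hs

end StackStep

theorem StackStep.eq_of_sWellFormed (hcr : Disjoint c r) {u : List A} (hu : SWellFormed c r u)
    {st : ℕ → List Γ} {l : ℕ}
    (hst : ∀ k x, u[k]? = some x → StackStep c r x (st (l + k)) (st (l + k + 1))) :
    st (l + u.length) = st l := by
  induction hu generalizing l with
  | nil => rfl
  | single hc hr => exact (hst 0 _ rfl).eq_self hc hr
  | @wrap a b u ha hb _ ih =>
    obtain ⟨g, hpush⟩ := (hst 0 a rfl).eq_cons hcr ha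
    have hinner : st (l + 1 + u.length) = st (l + 1) := ih fun k x hx => by
      have hk := (List.getElem?_eq_some_iff.mp hx).1
      have := hst (k + 1) x (by
        rw [List.getElem?_append_left (by simpa using hk), List.getElem?_cons_succ]
        exact hx)
      rwa [show l + (k + 1) = l + 1 + k by omega] at this
    have hpop := (hst (u.length + 1) b (by simp)).eq_tail hcr hb
    rw [show l + (u.length + 1) = l + 1 + u.length by omega, hinner, hpush] at hpop
    rw [show l + (a :: u ++ [b]).length = l + 1 + u.length + 1 by simp; omega, hpop]
    rfl
  | @concat u v _ _ ihu ihv =>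
    have hu : st (l + u.length) = st l := ihu fun k x hx => hst k x (by
      rw [List.getElem?_append_left (List.getElem?_eq_some_iff.mp hx).1]; exact hx)
    have hv : st (l + u.length + v.length) = st (l + u.length) := ihv fun k x hx => by
      have := hst (u.length + k) x (by rw [List.getElem?_append_right (by omega)]; simpa using hx)
      rwa [← add_assoc] at this
    rw [List.length_append, ← add_assoc, hv, hu]

/-- `st i` is the contents of the stack before position `i`. -/
def IsStackRun (c r : Set A) (w : List A) (st : ℕ → List Γ) : Prop :=
  ∀ i a, w[i]? = some a → StackStep c r a (st i) (st (i + 1))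

namespace IsStackRun

variable {w : List A} {st : ℕ → List Γ}

theorem eq_of_sWellFormed (hcr : Disjoint c r) (hst : IsStackRun c r w st) {l m : ℕ}
    (hlm : l ≤ m) (hm : m ≤ w.length) (hwf : SWellFormed c r (w.segment l m)) : st m = st l := by
  have := StackStep.eq_of_sWellFormed hcr hwf (st := st) (l := l) fun k x hx =>
    hst (l + k) x (List.getElem?_add_of_segment hx)
  rwa [List.length_segment hm, Nat.add_sub_cancel' hlm] at this

theorem exists_pending_call (hcr : Disjoint c r) (hst : IsStackRun c r w st) (h0 : st 0 = []) :
    ∀ i ≤ w.length, st i ≠ [] →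
      ∃ j < i, (∃ a, w[j]? = some a ∧ a ∈ c) ∧ SWellFormed c r (w.segment (j + 1) i) := by
  intro i
  induction i using Nat.strong_induction_on with
  | _ i ih =>
  intro hi hne
  obtain _ | i := i
  · exact absurd h0 hne
  obtain ⟨b, hb⟩ : ∃ b, w[i]? = some b := ⟨w[i], List.getElem?_eq_getElem (by omega)⟩
  have hsucc := List.segment_succ hb
  by_cases hbc : b ∈ c
  · exact ⟨i, by omega, ⟨b, hb, hbc⟩, by rw [List.segment_self]; exact .nil⟩
  by_cases hbr : b ∈ r
  · have hpop := (hst i b hb).eq_tail hcr hbr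
    have hne' : st i ≠ [] := fun hnil => hne (by rw [hpop, hnil]; rfl)
    obtain ⟨j, hji, ⟨a, ha, hac⟩, hwf⟩ := ih i (by omega) (by omega) hne'
    obtain ⟨g, hpush⟩ := (hst j a ha).eq_cons hcr hac
    have hret : st i = st (j + 1) := hst.eq_of_sWellFormed hcr (by omega) (by omega) hwf
    rw [hret, hpush, List.tail_cons] at hpop
    obtain ⟨j', hj'j, hcall, hwf'⟩ := ih j (by omega) (by omega) (by rw [← hpop]; exact hne)
    refine ⟨j', by omega, hcall, ?_⟩
    rw [w.segment_append (by omega : j' + 1 ≤ j) (by omega : j ≤ i + 1),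
      w.segment_append (by omega : j ≤ j + 1) (by omega : j + 1 ≤ i + 1),
      w.segment_append (by omega : j + 1 ≤ i) (by omega : i ≤ i + 1), List.segment_succ ha, hsucc]
    exact hwf'.concat (.wrap hac hbr hwf)
  · have hskip := (hst i b hb).eq_self hbc hbr
    obtain ⟨j, hji, hcall, hwf⟩ := ih i (by omega) (by omega) (by rwa [← hskip])
    refine ⟨j, by omega, hcall, ?_⟩
    rw [w.segment_append (by omega : j + 1 ≤ i) (by omega : i ≤ i + 1), hsucc]
    exact hwf.concat (.single hbc hbr)

end IsStackRun

end StackRun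

namespace CRAlphabet

variable {K : ℕ} {A : Type} (h : CRAlphabet K A)

theorem disjoint_callSet_retSet_s8 (s : Fin K) : Disjoint (h.callSet s) (h.retSet s) :=
  Set.disjoint_left.mpr fun a (hc : h.kind a = _) (hr : h.kind a = _) => by simp [hc] at hr

end CRAlphabet

section Matching

variable {K : ℕ} {A Γ : Type} {h : CRAlphabet K A} {w : List A} {s : Fin K} {i : ℕ} {a : A}

theorem Matched.kind_eq_ret {j : ℕ} (hm : Matched h w s j i) (hwi : w[i]? = some a) :
    h.kind a = .ret s := by
  obtain ⟨-, -, -, ⟨b, hb, hbr⟩, -⟩ := hm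
  rw [hwi, Option.some_inj] at hb
  exact hb ▸ hbr

theorem muAny_iff_of_kind_eq_ret {j : ℕ} (hwi : w[i]? = some a) (hk : h.kind a = .ret s) :
    MuAny h w j i ↔ Matched h w s j i := by
  refine ⟨fun ⟨t, ht⟩ => ?_, fun hm => ⟨s, hm⟩⟩
  obtain rfl : s = t := by simpa [hk] using ht.kind_eq_ret hwi
  exact ht

theorem not_muAny_of_kind_ne_ret {j : ℕ} (hwi : w[i]? = some a) (hk : ∀ s, h.kind a ≠ .ret s) :
    ¬ MuAny h w j i :=
  fun ⟨t, ht⟩ => hk t (ht.kind_eq_ret hwi)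

variable {st : ℕ → List Γ}

theorem IsStackRun.eq_of_matched (hst : IsStackRun (h.callSet s) (h.retSet s) w st) {j : ℕ}
    (hm : Matched h w s j i) : st i = st (j + 1) :=
  hst.eq_of_sWellFormed (h.disjoint_callSet_retSet_s8 s) hm.1 hm.2.1.le hm.2.2.2.2

theorem IsStackRun.eq_nil_of_not_matched (hst : IsStackRun (h.callSet s) (h.retSet s) w st)
    (h0 : st 0 = []) (hwi : w[i]? = some a) (hk : h.kind a = .ret s)
    (hnm : ¬ ∃ j, Matched h w s j i) : st i = [] := by
  have hi : i < w.length := (List.getElem?_eq_some_iff.mp hwi).1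
  by_contra hne
  obtain ⟨j, hji, hcall, hwf⟩ :=
    hst.exists_pending_call (h.disjoint_callSet_retSet_s8 s) h0 i hi.le hne
  exact hnm ⟨j, ⟨hji, hi, hcall, ⟨a, hwi, hk⟩, hwf⟩⟩

end Matching

theorem forall_eq_and_or_ne_and_iff {ι : Type*} {s : ι} {P R : ι → Prop} :
    (∀ t, s = t ∧ P t ∨ ¬ s = t ∧ R t) ↔ P s ∧ ∀ t, t ≠ s → R t := by
  refine ⟨fun H => ⟨((H s).resolve_right fun h => h.1 rfl).2,
    fun t ht => ((H t).resolve_left fun h => ht h.1.symm).2⟩, fun ⟨hP, hR⟩ t => ?_⟩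
  by_cases hst : s = t
  · exact .inl ⟨hst, hst ▸ hP⟩
  · exact .inr ⟨hst, hR t (Ne.symm hst)⟩

namespace MVPA

variable {K : ℕ} {A Q Γ : Type} {h : CRAlphabet K A} {M : MVPA K A Q Γ}

theorem vStep_iff {a : A} {c c' : Q × (Fin K → List Γ)} :
    vStep h M a c c' ↔
      (∀ s, StackStep (h.callSet s) (h.retSet s) a (c.2 s) (c'.2 s)) ∧
      match h.kind a with
      | .call s => ∃ g, (c'.2 s).head? = some g ∧ M.pushT c.1 a g c'.1
      | .ret s => M.popT c.1 a (c.2 s).head? c'.1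
      | .int => M.intT c.1 a c'.1 := by
  obtain ⟨q, σ⟩ := c
  obtain ⟨q', σ'⟩ := c'
  cases hk : h.kind a <;>
    simp only [vStep, StackStep, CRAlphabet.callSet, CRAlphabet.retSet, Set.mem_ofPred_eq, hk,
      CRKind.call.injEq, CRKind.ret.injEq, reduceCtorEq, ne_eq, exists_eq_left', false_and,
      exists_false, or_self, or_false, false_or, true_and, not_false_eq_true,
      forall_eq_and_or_ne_and_iff]
  case call s =>
    constructor
    · rintro ⟨g, hpush, hs, hother⟩
      exact ⟨⟨⟨g, hs⟩, hother⟩, g, by simp [hs], hpush⟩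
    · rintro ⟨⟨⟨g, hs⟩, hother⟩, g', hg', hpush⟩
      obtain rfl : g = g' := by simpa [hs] using hg'
      exact ⟨g, hpush, hs, hother⟩
  case ret s =>
    rw [and_comm (a := σ' s = _), and_assoc]
    refine and_congr_right fun _ => ?_
    generalize σ s = τ
    cases τ <;> simp [and_comm, eq_comm]
  case int =>
    rw [funext_iff]
    exact and_comm

end MVPA

section Runs

variable {K : ℕ} {A Q : Type} {h : CRAlphabet K A} {w : List A} {i : ℕ} {a : A}

theorem muAny_clause_iff_of_kind_eq_ret {s : Fin K} (hwi : w[i]? = some a)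
    (hk : h.kind a = .ret s) {P : ℕ → Prop} {R : Prop} :
    ((∃ j, MuAny h w j i ∧ P j) ∨ (¬ (∃ j, MuAny h w j i) ∧ R)) ↔
      ((∃ j, Matched h w s j i ∧ P j) ∨ (¬ (∃ j, Matched h w s j i) ∧ R)) := by
  simp only [muAny_iff_of_kind_eq_ret hwi hk]

theorem muAny_clause_iff_of_kind_ne_ret (hwi : w[i]? = some a) (hk : ∀ s, h.kind a ≠ .ret s)
    {P : ℕ → Prop} {R : Prop} :
    ((∃ j, MuAny h w j i ∧ P j) ∨ (¬ (∃ j, MuAny h w j i) ∧ R)) ↔ R := by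
  simp [not_muAny_of_kind_ne_ret hwi hk]

/-- `r i` is the state before position `i`, so `r 0` is the initial state; in `gRun` the state
`ρ i` is the one after position `i`. -/
def GMNWA.IsRun (h : CRAlphabet K A) (B : GMNWA K A Q) (w : List A) (r : ℕ → Q) : Prop :=
  ∀ i a, w[i]? = some a →
    (∃ j, MuAny h w j i ∧ B.delta2 (r (j + 1)) (r i) a (r (i + 1))) ∨
      (¬ (∃ j, MuAny h w j i) ∧ B.delta1 (r i) a (r (i + 1)))

theorem GMNWA.mem_gLang_iff {B : GMNWA K A Q} (hC : B.qC = ∅) :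
    w ∈ gLang h B ↔ w ≠ [] ∧ ∃ r, r 0 ∈ B.qI ∧ B.IsRun h w r ∧ r w.length ∈ B.qF := by
  constructor
  · rintro ⟨hw, ρ, ⟨⟨q₀, hq₀, a₀, hw₀, hd₀⟩, hρ⟩, hF, -⟩
    refine ⟨hw, fun | 0 => q₀ | i + 1 => ρ i, hq₀, fun i a hwi => ?_, ?_⟩
    · cases i with
      | zero =>
        obtain rfl : a₀ = a := Option.some_inj.mp (hw₀.symm.trans hwi)
        exact .inr ⟨fun ⟨j, _, hm⟩ => absurd hm.1 (Nat.not_lt_zero j), hd₀⟩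
      | succ i =>
        obtain ⟨a', ha', hclause⟩ :=
          hρ (i + 1) i.succ_pos (List.getElem?_eq_some_iff.mp hwi).1
        obtain rfl : a' = a := Option.some_inj.mp (ha'.symm.trans hwi)
        exact hclause
    · obtain ⟨n, hn⟩ : ∃ n, w.length = n + 1 :=
        Nat.exists_eq_add_one.mpr (List.length_pos_iff.mpr hw)
      rw [hn] at hF ⊢
      exact hF
  · rintro ⟨hw, r, h₀, hr, hF⟩
    have hlen : 0 < w.length := List.length_pos_iff.mpr hw
    refine ⟨hw, fun i => r (i + 1), ⟨?_, fun i hi hiw => ?_⟩, ?_, by simp [hC]⟩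
    · refine ⟨r 0, h₀, w[0], List.getElem?_eq_getElem hlen, ?_⟩
      rcases hr 0 _ (List.getElem?_eq_getElem hlen) with ⟨j, ⟨_, hm⟩, -⟩ | ⟨-, hd⟩
      · exact absurd hm.1 (Nat.not_lt_zero j)
      · exact hd
    · obtain ⟨i, rfl⟩ : ∃ i', i = i' + 1 := Nat.exists_eq_add_one.mpr hi
      exact ⟨w[i + 1], List.getElem?_eq_getElem hiw, hr (i + 1) _ (List.getElem?_eq_getElem hiw)⟩
    · simpa [Nat.sub_add_cancel hlen] using hF

end Runs

section StacksOf

variable {K : ℕ} {A Γ : Type} {h : CRAlphabet K A} {w : List A} {τ : ℕ → Fin K → Option Γ}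

def stacksOf (h : CRAlphabet K A) (w : List A) (τ : ℕ → Fin K → Option Γ) :
    ℕ → Fin K → List Γ
  | 0, _ => []
  | i + 1, s =>
    match w[i]?.map h.kind with
    | some (.call t) => if t = s then (τ (i + 1) s).toList ++ stacksOf h w τ i s
        else stacksOf h w τ i s
    | some (.ret t) => if t = s then (stacksOf h w τ i s).tail else stacksOf h w τ i s
    | _ => stacksOf h w τ i s

theorem stacksOf_succ_of_kind_eq_call {i : ℕ} {a : A} {s : Fin K} {g : Γ} (hwi : w[i]? = some a)
    (hk : h.kind a = .call s) (hg : τ (i + 1) s = some g) :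
    stacksOf h w τ (i + 1) s = g :: stacksOf h w τ i s := by
  simp [stacksOf, hwi, hk, hg]

theorem isStackRun_stacksOf
    (hτ : ∀ i a s, w[i]? = some a → h.kind a = .call s → ∃ g, τ (i + 1) s = some g)
    (s : Fin K) :
    IsStackRun (h.callSet s) (h.retSet s) w fun i => stacksOf h w τ i s := by
  intro i a hwi
  by_cases hc : a ∈ h.callSet s
  · obtain ⟨g, hg⟩ := hτ i a s hwi hc
    exact .inl ⟨hc, g, stacksOf_succ_of_kind_eq_call hwi hc hg⟩
  by_cases hr : a ∈ h.retSet s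
  · exact .inr (.inl ⟨hr, by simp [stacksOf, hwi, show h.kind a = .ret s from hr]⟩)
  refine .inr (.inr ⟨hc, hr, ?_⟩)
  simp only [CRAlphabet.callSet, CRAlphabet.retSet, Set.mem_ofPred_eq] at hc hr
  cases hk : h.kind a <;> simp_all [stacksOf]

end StacksOf

namespace MVPA

variable {K : ℕ} {A Q Γ : Type} {h : CRAlphabet K A} {M : MVPA K A Q Γ} {w : List A}

/-- Besides the state of `M`, a state records for every stack `s` the symbol pushed on `s` at
this position if it is a call of `s`; the matching return reads it back from the state reached
at the call. -/
def toGMNWA (h : CRAlphabet K A) (M : MVPA K A Q Γ) : GMNWA K A (Q × (Fin K → Option Γ)) where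
  delta1 p a p' :=
    match h.kind a with
    | .call s => ∃ g, p'.2 s = some g ∧ M.pushT p.1 a g p'.1
    | .ret _ => M.popT p.1 a none p'.1
    | .int => M.intT p.1 a p'.1
  delta2 pc p a p' := ∃ s, h.kind a = .ret s ∧ M.popT p.1 a (pc.2 s) p'.1
  qI := {p | p.1 ∈ M.qI}
  qF := {p | p.1 ∈ M.qF}
  qC := ∅

theorem isRun_toGMNWA {f : ℕ → Q × (Fin K → List Γ)} (h₀ : ∀ s, (f 0).2 s = [])
    (hf : ∀ i a, w[i]? = some a → vStep h M a (f i) (f (i + 1))) :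
    (M.toGMNWA h).IsRun h w fun i => ((f i).1, fun s => ((f i).2 s).head?) := by
  have hst (s : Fin K) : IsStackRun (h.callSet s) (h.retSet s) w fun i => (f i).2 s :=
    fun i a hwi => (vStep_iff.mp (hf i a hwi)).1 s
  intro i a hwi
  have hctrl := (vStep_iff.mp (hf i a hwi)).2
  cases hk : h.kind a with
  | call s =>
    rw [muAny_clause_iff_of_kind_ne_ret hwi (by simp [hk])]
    simpa only [toGMNWA, hk] using hctrl
  | ret s =>
    rw [muAny_clause_iff_of_kind_eq_ret hwi hk]
    simp only [hk] at hctrl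
    by_cases hm : ∃ j, Matched h w s j i
    · obtain ⟨j, hm⟩ := hm
      refine .inl ⟨j, hm, s, hk, ?_⟩
      have hret : (f i).2 s = (f (j + 1)).2 s := (hst s).eq_of_matched hm
      rwa [hret] at hctrl
    · refine .inr ⟨hm, ?_⟩
      simp only [toGMNWA, hk]
      rwa [(hst s).eq_nil_of_not_matched (h₀ s) hwi hk hm] at hctrl
  | int =>
    rw [muAny_clause_iff_of_kind_ne_ret hwi (by simp [hk])]
    simpa only [toGMNWA, hk] using hctrl

theorem vStep_of_isRun_toGMNWA {r : ℕ → Q × (Fin K → Option Γ)}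
    (hr : (M.toGMNWA h).IsRun h w r) (i : ℕ) (a : A) (hwi : w[i]? = some a) :
    vStep h M a ((r i).1, stacksOf h w (fun i => (r i).2) i)
      ((r (i + 1)).1, stacksOf h w (fun i => (r i).2) (i + 1)) := by
  have hpush : ∀ i a s, w[i]? = some a → h.kind a = .call s →
      ∃ g, (r (i + 1)).2 s = some g ∧ M.pushT (r i).1 a g (r (i + 1)).1 := by
    intro i a s hwi hk
    have := (muAny_clause_iff_of_kind_ne_ret hwi (by simp [hk])).mp (hr i a hwi)
    simpa only [toGMNWA, hk] using this
  have hst := isStackRun_stacksOf (τ := fun i => (r i).2) fun i a s hwi hk =>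
    (hpush i a s hwi hk).imp fun _ => And.left
  rw [vStep_iff]
  refine ⟨fun s => hst s i a hwi, ?_⟩
  cases hk : h.kind a with
  | call s =>
    obtain ⟨g, hg, hp⟩ := hpush i a s hwi hk
    exact ⟨g, by simp [stacksOf_succ_of_kind_eq_call (τ := fun i => (r i).2) hwi hk hg], hp⟩
  | ret s =>
    rcases (muAny_clause_iff_of_kind_eq_ret hwi hk).mp (hr i a hwi) with
      ⟨j, hm, s', hk', hpop⟩ | ⟨hm, hpop⟩
    · obtain rfl : s = s' := by simpa [hk] using hk'
      obtain ⟨b, hwj, hb⟩ := hm.2.2.1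
      obtain ⟨g, hg, -⟩ := hpush j b s hwj hb
      dsimp only
      rwa [(hst s).eq_of_matched hm,
        stacksOf_succ_of_kind_eq_call (τ := fun i => (r i).2) hwj hb hg, List.head?_cons, ← hg]
    · simp only [toGMNWA, hk] at hpop
      dsimp only
      rwa [(hst s).eq_nil_of_not_matched rfl hwi hk hm]
  | int =>
    have := (muAny_clause_iff_of_kind_ne_ret hwi (by simp [hk])).mp (hr i a hwi)
    simpa only [toGMNWA, hk] using this

theorem vAccepts_iff_exists_isRun :
    vAccepts h M w ↔ ∃ r, r 0 ∈ (M.toGMNWA h).qI ∧ (M.toGMNWA h).IsRun h w r ∧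
      r w.length ∈ (M.toGMNWA h).qF := by
  constructor
  · rintro ⟨f, hI, h₀, hf, hF⟩
    exact ⟨_, hI, isRun_toGMNWA h₀ hf, hF⟩
  · rintro ⟨r, hI, hr, hF⟩
    exact ⟨fun i => ((r i).1, stacksOf h w (fun i => (r i).2) i), hI, fun _ => rfl,
      vStep_of_isRun_toGMNWA hr, hF⟩

theorem gLang_toGMNWA (h : CRAlphabet K A) (M : MVPA K A Q Γ) :
    gLang h (M.toGMNWA h) = vLang h M := by
  ext w
  rw [GMNWA.mem_gLang_iff rfl, vLang, Set.mem_ofPred_eq, vAccepts_iff_exists_isRun]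

end MVPA

namespace GMNWA

variable {K : ℕ} {A Q : Type} {h : CRAlphabet K A} {B : GMNWA K A Q} {w : List A}

/-- At a call the MVPA pushes the state it moves to, which is the state at the call that the
matching return of `B` consults. -/
def toMVPA (B : GMNWA K A Q) : MVPA K A Q Q where
  pushT q a g q' := B.delta1 q a q' ∧ g = q'
  popT q a og q' :=
    match og with
    | some g => B.delta2 g q a q'
    | none => B.delta1 q a q'
  intT := B.delta1
  qI := B.qI
  qF := B.qF

theorem isRun_toMVPA_toGMNWA {r : ℕ → Q} (hr : B.IsRun h w r) :
    (B.toMVPA.toGMNWA h).IsRun h w fun i => (r i, fun _ => some (r i)) := by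
  intro i a hwi
  have hri := hr i a hwi
  cases hk : h.kind a with
  | ret s =>
    rw [muAny_clause_iff_of_kind_eq_ret hwi hk] at hri ⊢
    rcases hri with ⟨j, hm, hd⟩ | ⟨hm, hd⟩
    · exact .inl ⟨j, hm, s, hk, hd⟩
    · exact .inr ⟨hm, by simpa only [MVPA.toGMNWA, toMVPA, hk] using hd⟩
  | call s | int =>
    rw [muAny_clause_iff_of_kind_ne_ret hwi (by simp [hk])] at hri ⊢
    simpa [MVPA.toGMNWA, toMVPA, hk] using hri

theorem isRun_of_isRun_toMVPA_toGMNWA {r : ℕ → Q × (Fin K → Option Q)}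
    (hr : (B.toMVPA.toGMNWA h).IsRun h w r) : B.IsRun h w fun i => (r i).1 := by
  have hcall : ∀ i a s, w[i]? = some a → h.kind a = .call s →
      (r (i + 1)).2 s = some (r (i + 1)).1 ∧ B.delta1 (r i).1 a (r (i + 1)).1 := by
    intro i a s hwi hk
    have := (muAny_clause_iff_of_kind_ne_ret hwi (by simp [hk])).mp (hr i a hwi)
    simp only [MVPA.toGMNWA, toMVPA, hk] at this
    obtain ⟨g, hg, hd, rfl⟩ := this
    exact ⟨hg, hd⟩
  intro i a hwi
  have hri := hr i a hwi
  cases hk : h.kind a with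
  | call s =>
    rw [muAny_clause_iff_of_kind_ne_ret hwi (by simp [hk])]
    exact (hcall i a s hwi hk).2
  | ret s =>
    rw [muAny_clause_iff_of_kind_eq_ret hwi hk] at hri ⊢
    rcases hri with ⟨j, hm, s', hk', hd⟩ | ⟨hm, hd⟩
    · obtain rfl : s = s' := by simpa [hk] using hk'
      obtain ⟨b, hwj, hb⟩ := hm.2.2.1
      rw [(hcall j b s hwj hb).1] at hd
      exact .inl ⟨j, hm, hd⟩
    · exact .inr ⟨hm, by simpa only [MVPA.toGMNWA, toMVPA, hk] using hd⟩
  | int =>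
    rw [muAny_clause_iff_of_kind_ne_ret hwi (by simp [hk])] at hri ⊢
    simpa only [MVPA.toGMNWA, toMVPA, hk] using hri

theorem vLang_toMVPA (hC : B.qC = ∅) : vLang h B.toMVPA = gLang h B := by
  ext w
  rw [mem_gLang_iff hC, vLang, Set.mem_ofPred_eq, MVPA.vAccepts_iff_exists_isRun]
  refine and_congr_right fun _ => ⟨fun ⟨r, h₀, hr, hF⟩ => ?_, fun ⟨r, h₀, hr, hF⟩ => ?_⟩
  · exact ⟨fun i => (r i).1, h₀, isRun_of_isRun_toMVPA_toGMNWA hr, hF⟩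
  · exact ⟨fun i => (r i, fun _ => some (r i)), h₀, isRun_toMVPA_toGMNWA hr, hF⟩

end GMNWA

/-- MVPA and MNWA are expressively equivalent: a set `L` of
nested words over a `K`-stack call-return alphabet is recognized by some
(finite) multi-stack visibly pushdown automaton iff it is recognized by some
(finite) multi-stack nested-word automaton (i.e. with no calling states). -/
theorem stmt8 {K : ℕ} {A : Type} (h : CRAlphabet K A) (L : Set (List A)) :
    (∃ (Q Γ : Type) (_ : Fintype Q) (_ : Fintype Γ) (M : MVPA K A Q Γ),
        vLang h M = L) ↔
    (∃ (Q : Type) (_ : Fintype Q) (B : GMNWA K A Q),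
        B.qC = ∅ ∧ gLang h B = L) := by
  constructor
  · rintro ⟨Q, Γ, _, _, M, rfl⟩
    exact ⟨_, inferInstance, M.toGMNWA h, rfl, M.gLang_toGMNWA h⟩
  · rintro ⟨Q, _, B, hC, rfl⟩
    exact ⟨Q, Q, ‹_›, ‹_›, B.toMVPA, B.vLang_toMVPA hC⟩
end
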